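/- The optimal profile f₀(t) = 1 − √2·exp(−t/√2)·cos(t/√2 − π/4) exceeds the value 1: there exists t > 0 with f₀(t) > 1 (for instance t = √2·π). -/

import Mathlib

/-- The optimal profile `f₀(t) = 1 − √2·exp(−t/√2)·cos(t/√2 − π/4)`. -/
noncomputable def optProfile : ℝ → ℝ := fun t =>
  1 - Real.sqrt 2 * Real.exp (-t / Real.sqrt 2) * Real.cos (t / Real.sqrt 2 - Real.pi / 4)

open Real

theorem optProfile_sqrt_two_mul (s : ℝ) :
    optProfile (√2 * s) = 1 - √2 * exp (-s) * cos (s - π / 4) := by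
  have hsqrt : √2 ≠ 0 := by positivity
  simp only [optProfile, neg_div, mul_div_cancel_left₀ s hsqrt]

theorem optProfile_sqrt_two_mul_pi : optProfile (√2 * π) = 1 + exp (-π) := by
  have hcos : cos (π - π / 4) = -(√2 / 2) := by rw [cos_pi_sub, cos_pi_div_four]
  have hsq : √2 * √2 = 2 := mul_self_sqrt zero_le_two
  rw [optProfile_sqrt_two_mul, hcos]
  linear_combination (exp (-π) / 2) * hsq

/-- The optimal profile overshoots the value `1`: there is `t > 0` with `f₀(t) > 1`. -/
theorem optProfile_exceeds_one : ∃ t > (0 : ℝ), optProfile t > 1 :=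
  ⟨√2 * π, by positivity, by rw [optProfile_sqrt_two_mul_pi]; linarith [exp_pos (-π)]⟩
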